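/- Suppose λ is strongly inaccessible, ⟨(T_ξ, f_ξ) : ξ < μ⟩ is the increasing continuous sequence of Q*-conditions constructed in the proof of Theorem 1.8 with T_μ = ⋃_{ξ<μ} T_ξ and μ-diamond sequence ⟨ν_δ : δ ∈ S₀ ∩ μ⟩, where at successor steps ξ = ζ+1 the level α(T_ζ) of T_ξ omits ν_{α(T_ζ)} whenever α(T_ζ) ∈ S₀ and ν_{α(T_ζ)} ∉ range(f_ζ). Then for every ρ ∈ lim_μ(T_μ) (a cofinal branch through T_μ) the set {δ ∈ S₀ ∩ μ : α(T_δ) = δ and ν_δ = ρ↾δ and ρ↾δ ∈ range(f_δ)} is stationary in μ. -/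

import Mathlib

open Ordinal Set Cardinal

/-- A transfinite binary sequence: a length and values, zero beyond the length. -/
structure BSeq where
  len : Ordinal.{0}
  val : Ordinal.{0} → Bool
  val_eq_false : ∀ β, len ≤ β → val β = false

namespace BSeq

/-- The empty sequence. -/
def nil : BSeq := ⟨0, fun _ => false, fun _ _ => rfl⟩

/-- Restriction `η↾β` of a sequence to length `β`. -/
noncomputable def restrict (η : BSeq) (β : Ordinal) : BSeq :=
  ⟨min η.len β, fun γ => if γ < β then η.val γ else false, by
    intro γ hγ
    rcases min_le_iff.mp hγ with h | h
    · by_cases hb : γ < β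
      · simpa [hb] using η.val_eq_false γ h
      · simp [hb]
    · simp [not_lt.mpr h]⟩

/-- `ν ⊴ η` : `ν` is an initial segment of `η`. -/
def IsInitSeg (ν η : BSeq) : Prop :=
  ν.len ≤ η.len ∧ ∀ β < ν.len, ν.val β = η.val β

/-- `ν ◁ η` : `ν` is a proper initial segment of `η`. -/
def IsStrictInitSeg (ν η : BSeq) : Prop :=
  ν.IsInitSeg η ∧ ν.len < η.len

/-- `η⌢⟨b⟩`, appending one bit. -/
noncomputable def snoc (η : BSeq) (b : Bool) : BSeq :=
  ⟨η.len + 1, fun β => if β = η.len then b else η.val β, by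
    intro β hβ
    have h1 : η.len < β := by
      exact lt_of_lt_of_le (lt_add_one η.len) hβ
    show (if β = η.len then b else η.val β) = false
    rw [if_neg (ne_of_gt h1)]
    exact η.val_eq_false β h1.le⟩

end BSeq

/-- The level `T_{[β]} = T ∩ 2^β`. -/
def level (T : Set BSeq) (β : Ordinal) : Set BSeq := {η ∈ T | η.len = β}

/-- `T_{[<β]} = T ∩ 2^{<β}`. -/
def levelLT (T : Set BSeq) (β : Ordinal) : Set BSeq := {η ∈ T | η.len < β}

/-- `lim_δ(T) = {η ∈ 2^δ : ∀ β < δ, η↾β ∈ T}`. -/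
def limAt (T : Set BSeq) (δ : Ordinal) : Set BSeq :=
  {η | η.len = δ ∧ ∀ β < δ, η.restrict β ∈ T}

/-- `T ⊆ 2^{<α}` is an `α`-tree. -/
structure IsTree (α : Ordinal) (T : Set BSeq) : Prop where
  limit : Order.IsSuccLimit α
  len_lt : ∀ η ∈ T, η.len < α
  nil_mem : BSeq.nil ∈ T
  downClosed : ∀ ν η : BSeq, ν.IsStrictInitSeg η → η ∈ T → ν ∈ T
  succ_mem : ∀ η ∈ T, ∀ b : Bool, η.snoc b ∈ T
  ext_mem : ∀ η ∈ T, ∀ β, η.len ≤ β → β < α → ∃ ρ ∈ T, η.IsInitSeg ρ ∧ ρ.len = β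

/-- `T` has true height `α`: every node lies on a cofinal branch through `T`. -/
def TrueHeight (α : Ordinal) (T : Set BSeq) : Prop :=
  ∀ η ∈ T, ∃ ν : BSeq, ν.len = α ∧ η.IsStrictInitSeg ν ∧ ∀ β < α, ν.restrict β ∈ T

/-- A condition of the forcing `Q`: a tree of true height `α` (a limit ordinal)
omitting at most one limit point at each limit level. -/
structure IsCond (α : Ordinal) (T : Set BSeq) : Prop where
  tree : IsTree α T
  trueHeight : TrueHeight α T
  omits_le_one : ∀ δ < α, Order.IsSuccLimit δ → (limAt T δ \ level T δ).Subsingleton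

/-- The end-extension order of `Q`. -/
def QLe (α₁ : Ordinal) (T₁ : Set BSeq) (α₂ : Ordinal) (T₂ : Set BSeq) : Prop :=
  α₁ ≤ α₂ ∧ T₁ = levelLT T₂ α₁

/-- `f` is a witness for `T` (of height `α`). -/
def IsWitness (α : Ordinal) (T : Set BSeq) (f : BSeq → BSeq) : Prop :=
  ∀ η ∈ T, f η ∈ limAt T α ∧ η.IsStrictInitSeg (f η)

/-- The order of `Q^*`. -/
def QsLe (α₁ : Ordinal) (T₁ : Set BSeq) (f₁ : BSeq → BSeq)
    (α₂ : Ordinal) (T₂ : Set BSeq) (f₂ : BSeq → BSeq) : Prop :=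
  QLe α₁ T₁ α₂ T₂ ∧ ∀ η ∈ T₁, (f₁ η).IsInitSeg (f₂ η)

/-- `C` is a club (closed unbounded) subset of `μ`. -/
def IsClubIn (C : Set Ordinal) (μ : Ordinal) : Prop :=
  C ⊆ Set.Iio μ ∧
  (∀ δ < μ, Order.IsSuccLimit δ → (∀ β < δ, ∃ γ ∈ C, β < γ ∧ γ < δ) → δ ∈ C) ∧
  (∀ β < μ, ∃ γ ∈ C, β < γ ∧ γ < μ)

/-- `S` is stationary in `μ`. -/
def IsStationaryIn (S : Set Ordinal) (μ : Ordinal) : Prop :=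
  ∀ C, IsClubIn C μ → (S ∩ C).Nonempty

/-- The set of accumulation points of a set of ordinals. -/
def accPts (C : Set Ordinal) : Set Ordinal :=
  {β | 0 < β ∧ ∀ γ < β, ∃ δ ∈ C, γ < δ ∧ δ < β}

/-! The maps `a` of an increasing continuous chain of conditions are strictly increasing and
continuous, so their fixed points below `μ` form a club. Intersecting it with an arbitrary club,
the diamond yields `δ ∈ S₀` with `a δ = δ` and `ν δ = ρ↾δ`. Had `ρ↾δ` been outside the range of
`f δ`, the construction would have omitted `ν δ = ρ↾δ` from `T (δ + 1)`; but `ρ↾δ` is a node of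
`T_μ` of length `δ = a δ < a (δ + 1)`, and every such node already lies in `T (δ + 1)`. -/

open Order Function

theorem isSuccLimit_of_exists_between {α : Type*} [Preorder α] {a : α} (ha : ¬IsMin a)
    (h : ∀ b < a, ∃ c, b < c ∧ c < a) : IsSuccLimit a :=
  ⟨ha, fun b hb => let ⟨_, hbc, hca⟩ := h b hb.lt; hb.2 hbc hca⟩

section Club

variable {μ : Ordinal}

theorem exists_isSuccLimit_forall_exists_apply_lt (hμ : ℵ₀ < μ.cof) {F : Ordinal → Ordinal}
    (hF : ∀ x < μ, x < F x ∧ F x < μ) {β : Ordinal} (hβ : β < μ) :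
    ∃ δ < μ, β < δ ∧ IsSuccLimit δ ∧ ∀ γ < δ, ∃ x < δ, γ < x ∧ F x < δ := by
  have hiter_lt : ∀ n, F^[n] β < μ := fun n => by
    induction n with
    | zero => exact hβ
    | succ n ih => rw [iterate_succ_apply']; exact (hF _ ih).2
  have hiter_succ : ∀ n, F^[n] β < F^[n + 1] β := fun n => by
    rw [iterate_succ_apply']; exact (hF _ (hiter_lt n)).1
  set δ := ⨆ n, F^[n] β
  have hiter_lt_sup : ∀ n, F^[n] β < δ := fun n =>
    (hiter_succ n).trans_le (Ordinal.le_iSup (fun n => F^[n] β) (n + 1))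
  have hcofinal : ∀ γ < δ, ∃ x < δ, γ < x ∧ F x < δ := fun γ hγ =>
    let ⟨n, hn⟩ := Ordinal.lt_iSup_iff.mp hγ
    ⟨_, hiter_lt_sup n, hn, by rw [← iterate_succ_apply' F]; exact hiter_lt_sup (n + 1)⟩
  refine ⟨δ, Ordinal.lift_iSup_lt_of_lt_cof (by simpa using hμ) hiter_lt, hiter_lt_sup 0,
    isSuccLimit_of_exists_between (hiter_lt_sup 0).not_isMin fun γ hγ => ?_, hcofinal⟩
  obtain ⟨x, hx, hγx, -⟩ := hcofinal γ hγ
  exact ⟨x, hγx, hx⟩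

variable {a : Ordinal → Ordinal}

theorem le_apply_of_strictMonoOn (ha : StrictMonoOn a (Iio μ)) {ξ : Ordinal} (hξ : ξ < μ) :
    ξ ≤ a ξ := by
  induction ξ using WellFoundedLT.induction with
  | ind ξ ih =>
    by_contra! hlt
    exact (ih _ hlt (hlt.trans hξ)).not_gt (ha (hlt.trans hξ) hξ hlt)

theorem apply_eq_self_of_forall_lt (ha : StrictMonoOn a (Iio μ))
    (hcont : ∀ ξ, IsSuccLimit ξ → ξ < μ → a ξ = sSup (a '' Iio ξ)) {δ : Ordinal}
    (hδ : IsSuccLimit δ) (hδμ : δ < μ) (hclosed : ∀ γ < δ, a γ < δ) : a δ = δ := by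
  refine le_antisymm ?_ (le_apply_of_strictMonoOn ha hδμ)
  rw [hcont δ hδ hδμ]
  exact csSup_le (Set.Nonempty.image a ⟨0, hδ.pos⟩)
    (forall_mem_image.mpr fun γ hγ => (hclosed γ hγ).le)

theorem IsClubIn.inter_fixedPoints (hμ : ℵ₀ < μ.cof) (ha : StrictMonoOn a (Iio μ))
    (ha_lt : ∀ ξ < μ, a ξ < μ) (hcont : ∀ ξ, IsSuccLimit ξ → ξ < μ → a ξ = sSup (a '' Iio ξ))
    {C : Set Ordinal} (hC : IsClubIn C μ) : IsClubIn (C ∩ fixedPoints a) μ := by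
  refine ⟨fun ξ hξ => hC.1 hξ.1, fun δ hδμ hδ hacc => ?_, fun β hβ => ?_⟩
  · refine ⟨hC.2.1 δ hδμ hδ fun β hβ => ?_, apply_eq_self_of_forall_lt ha hcont hδ hδμ ?_⟩
    · obtain ⟨e, he, hβe, heδ⟩ := hacc β hβ
      exact ⟨e, he.1, hβe, heδ⟩
    · intro γ hγ
      obtain ⟨e, he, hγe, heδ⟩ := hacc γ hγ
      calc a γ < a e := ha (hγ.trans hδμ) (heδ.trans hδμ) hγe
        _ = e := he.2
        _ < δ := heδ
  · choose! F hFC hF using fun x (hx : x < μ) => hC.2.2 (max x (a x)) (max_lt hx (ha_lt x hx))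
    obtain ⟨δ, hδμ, hβδ, hδ, hcofinal⟩ := exists_isSuccLimit_forall_exists_apply_lt hμ
      (fun x hx => ⟨(le_max_left _ _).trans_lt (hF x hx).1, (hF x hx).2⟩) hβ
    have hF_lt : ∀ x < δ, max x (a x) < F x := fun x hx => (hF x (hx.trans hδμ)).1
    refine ⟨δ, ⟨hC.2.1 δ hδμ hδ fun γ hγ => ?_, apply_eq_self_of_forall_lt ha hcont hδ hδμ ?_⟩,
      hβδ, hδμ⟩
    · obtain ⟨x, hx, hγx, hFx⟩ := hcofinal γ hγ
      exact ⟨F x, hFC x (hx.trans hδμ), hγx.trans ((le_max_left _ _).trans_lt (hF_lt x hx)), hFx⟩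
    · intro γ hγ
      obtain ⟨x, hx, hγx, hFx⟩ := hcofinal γ hγ
      calc a γ < a x := ha (hγ.trans hδμ) (hx.trans hδμ) hγx
        _ < F x := (le_max_right _ _).trans_lt (hF_lt x hx)
        _ < δ := hFx

end Club

theorem BSeq.len_restrict_of_le {η : BSeq} {β : Ordinal} (h : β ≤ η.len) :
    (η.restrict β).len = β :=
  min_eq_right h

theorem mem_of_mem_of_len_lt {μ ζ ξ : Ordinal} {T : Ordinal → Set BSeq} {a : Ordinal → Ordinal}
    (hT : ∀ ζ ξ, ζ < ξ → ξ < μ → QLe (a ζ) (T ζ) (a ξ) (T ξ)) (hζ : ζ < μ) (hξ : ξ < μ)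
    {η : BSeq} (hη : η ∈ T ξ) (hlen : η.len < a ζ) : η ∈ T ζ := by
  rcases lt_trichotomy ζ ξ with h | rfl | h
  · rw [(hT ζ ξ h hξ).2]
    exact ⟨hη, hlen⟩
  · exact hη
  · rw [(hT ξ ζ h hζ).2] at hη
    exact hη.1

theorem stmt19_general (μ : Cardinal) (hμ : μ.IsInaccessible)
    (S₀ : Set Ordinal) (ν : Ordinal → BSeq)
    (hdiam : ∀ ρ : BSeq, ρ.len = μ.ord →
      IsStationaryIn {δ ∈ S₀ | ρ.restrict δ = ν δ} μ.ord)
    (T : Ordinal → Set BSeq) (a : Ordinal → Ordinal) (f : Ordinal → BSeq → BSeq)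
    (hcond : ∀ ξ < μ.ord, IsCond (a ξ) (T ξ) ∧ IsWitness (a ξ) (T ξ) (f ξ) ∧ a ξ < μ.ord)
    (hmono : ∀ ζ ξ, ζ < ξ → ξ < μ.ord →
      QsLe (a ζ) (T ζ) (f ζ) (a ξ) (T ξ) (f ξ) ∧ a ζ < a ξ)
    (hconta : ∀ ξ, Order.IsSuccLimit ξ → ξ < μ.ord → a ξ = sSup (a '' Set.Iio ξ))
    (homit : ∀ δ, δ < μ.ord → δ ∈ S₀ → a δ = δ →
      (∀ η ∈ T δ, f δ η ≠ ν δ) → ν δ ∉ T (δ + 1))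
    (ρ : BSeq) (hρ : ρ.len = μ.ord)
    (hρT : ∀ β < μ.ord, ρ.restrict β ∈ ⋃ ξ ∈ Set.Iio μ.ord, T ξ) :
    IsStationaryIn {δ | δ ∈ S₀ ∧ a δ = δ ∧ ν δ = ρ.restrict δ ∧
      ∃ η ∈ T δ, f δ η = ρ.restrict δ} μ.ord := by
  have ha : StrictMonoOn a (Iio μ.ord) := fun ζ _ ξ hξ h => (hmono ζ ξ h hξ).2
  intro C hC
  obtain ⟨δ, ⟨hδS₀, hρν⟩, hδC, haδ⟩ := hdiam ρ hρ _ <|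
    hC.inter_fixedPoints (hμ.aleph0_lt.trans_le hμ.le_cof_ord) ha
      (fun ξ hξ => (hcond ξ hξ).2.2) hconta
  have hδμ : δ < μ.ord := hC.1 hδC
  refine ⟨δ, ⟨hδS₀, haδ, hρν.symm, ?_⟩, hδC⟩
  by_contra! hρf
  have hδ1μ : δ + 1 < μ.ord := (Cardinal.isSuccLimit_ord hμ.aleph0_lt.le).add_one_lt hδμ
  obtain ⟨ξ, hξ, hρξ⟩ : ∃ ξ < μ.ord, ρ.restrict δ ∈ T ξ := by simpa using hρT δ hδμ
  have hρδ : ρ.restrict δ ∈ T (δ + 1) := by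
    refine mem_of_mem_of_len_lt (fun ζ ξ h hξ => (hmono ζ ξ h hξ).1.1) hδ1μ hξ hρξ ?_
    rw [BSeq.len_restrict_of_le (hρ ▸ hδμ.le)]
    exact haδ.symm.trans_lt (ha hδμ hδ1μ (lt_add_one δ))
  rw [hρν] at hρf hρδ
  exact homit δ hδμ hδS₀ haδ hρf hρδ

theorem stmt19 (μ : Cardinal) (hμ : μ.IsInaccessible)
    (S₀ : Set Ordinal) (ν : Ordinal → BSeq)
    (hS₀ : ∀ δ ∈ S₀, δ < μ.ord ∧ Order.IsSuccLimit δ) (hν : ∀ δ ∈ S₀, (ν δ).len = δ)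
    (hdiam : ∀ ρ : BSeq, ρ.len = μ.ord →
      IsStationaryIn {δ ∈ S₀ | ρ.restrict δ = ν δ} μ.ord)
    (T : Ordinal → Set BSeq) (a : Ordinal → Ordinal) (f : Ordinal → BSeq → BSeq)
    (hcond : ∀ ξ < μ.ord, IsCond (a ξ) (T ξ) ∧ IsWitness (a ξ) (T ξ) (f ξ) ∧ a ξ < μ.ord)
    (hmono : ∀ ζ ξ, ζ < ξ → ξ < μ.ord →
      QsLe (a ζ) (T ζ) (f ζ) (a ξ) (T ξ) (f ξ) ∧ a ζ < a ξ)
    (hconta : ∀ ξ, Order.IsSuccLimit ξ → ξ < μ.ord → a ξ = sSup (a '' Set.Iio ξ))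
    (homit : ∀ δ, δ < μ.ord → δ ∈ S₀ → a δ = δ →
      (∀ η ∈ T δ, f δ η ≠ ν δ) → ν δ ∉ T (δ + 1))
    (ρ : BSeq) (hρ : ρ.len = μ.ord)
    (hρT : ∀ β < μ.ord, ρ.restrict β ∈ ⋃ ξ ∈ Set.Iio μ.ord, T ξ) :
    IsStationaryIn {δ | δ ∈ S₀ ∧ a δ = δ ∧ ν δ = ρ.restrict δ ∧
      ∃ η ∈ T δ, f δ η = ρ.restrict δ} μ.ord :=
  stmt19_general μ hμ S₀ ν hdiam T a f hcond hmono hconta homit ρ hρ hρT
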